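/- There exist only finitely many inequivalent node classifiers on a bounded graph class definable in FOC2 of quantifier depth at most n; quantitatively, their number (and the parse-tree size needed to represent each) is at most f(n), where f(0) = 1000·2^{2^{2(m1+m2)}} and f(k+1) = 2^{2^{2(N+1)·f(k)}}, with m1 = |P1|, m2 = |P2|, and N the bound on the number of nodes. -/

import Mathlib

inductive Var : Type
  | x | y
deriving DecidableEq

structure FOCGraph (P1 P2 : Type) where
  V : Type
  [fintV : Fintype V]
  [decV : DecidableEq V]
  unary : P1 → V → Prop
  rel : P2 → V → V → Prop
  [decU : ∀ p, DecidablePred (unary p)]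
  [decR : ∀ r, DecidableRel (rel r)]

attribute [instance] FOCGraph.fintV FOCGraph.decV FOCGraph.decU FOCGraph.decR

inductive FOC2 (P1 P2 : Type) : Type
  | tru : FOC2 P1 P2
  | atom : P1 → Var → FOC2 P1 P2
  | rel : P2 → Var → Var → FOC2 P1 P2
  | and : FOC2 P1 P2 → FOC2 P1 P2 → FOC2 P1 P2
  | or : FOC2 P1 P2 → FOC2 P1 P2 → FOC2 P1 P2
  | not : FOC2 P1 P2 → FOC2 P1 P2
  | exge : ℕ → Var → FOC2 P1 P2 → FOC2 P1 P2

variable {P1 P2 : Type}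

/-- Satisfaction of a `FOC2` formula in a multi-relational graph under an assignment. -/
def FOCGraph.sat (G : FOCGraph P1 P2) : (Var → G.V) → FOC2 P1 P2 → Prop
  | _, .tru => True
  | σ, .atom p v => G.unary p (σ v)
  | σ, .rel r u w => G.rel r (σ u) (σ w)
  | σ, .and φ ψ => G.sat σ φ ∧ G.sat σ ψ
  | σ, .or φ ψ => G.sat σ φ ∨ G.sat σ ψ
  | σ, .not φ => ¬ G.sat σ φ
  | σ, .exge n v φ => ∃ S : Finset G.V, S.card = n ∧ ∀ a ∈ S, G.sat (Function.update σ v a) φ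

/-- Quantifier depth. -/
def FOC2.depth : FOC2 P1 P2 → ℕ
  | .tru => 0
  | .atom _ _ => 0
  | .rel _ _ _ => 0
  | .and φ ψ => max φ.depth ψ.depth
  | .or φ ψ => max φ.depth ψ.depth
  | .not φ => φ.depth
  | .exge _ _ φ => φ.depth + 1

/-- All counting thresholds are at most `m`. -/
def FOC2.thresholdsLe (m : ℕ) : FOC2 P1 P2 → Prop
  | .tru => True
  | .atom _ _ => True
  | .rel _ _ _ => True
  | .and φ ψ => φ.thresholdsLe m ∧ ψ.thresholdsLe m
  | .or φ ψ => φ.thresholdsLe m ∧ ψ.thresholdsLe m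
  | .not φ => φ.thresholdsLe m
  | .exge n _ φ => n ≤ m ∧ φ.thresholdsLe m

/-- Free variables. -/
def FOC2.freeVars : FOC2 P1 P2 → Finset Var
  | .tru => ∅
  | .atom _ v => {v}
  | .rel _ u w => {u, w}
  | .and φ ψ => φ.freeVars ∪ ψ.freeVars
  | .or φ ψ => φ.freeVars ∪ ψ.freeVars
  | .not φ => φ.freeVars
  | .exge _ v φ => φ.freeVars \ {v}

/-- Parse-tree size. -/
def FOC2.size : FOC2 P1 P2 → ℕ
  | .tru => 1
  | .atom _ _ => 1
  | .rel _ _ _ => 1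
  | .and φ ψ => φ.size + ψ.size + 1
  | .or φ ψ => φ.size + ψ.size + 1
  | .not φ => φ.size + 1
  | .exge _ _ φ => φ.size + 1


/-- The tower bound `f`: `f 0 = 1000·2^(2^(2(m1+m2)))`,
`f (k+1) = 2^(2^(2(N+1)·f k))`. -/
def fbound (m1 m2 N : ℕ) : ℕ → ℕ
  | 0 => 1000 * 2 ^ 2 ^ (2 * (m1 + m2))
  | k + 1 => 2 ^ 2 ^ (2 * (N + 1) * fbound m1 m2 N k)

/-!
The depth-`k` counting type of an assignment records its atomic type and, for `k > 0`, for each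
variable `v` and each depth-`(k-1)` type, the number of ways of reassigning `v` so as to realise
that type. On graphs with at most `N` nodes, formulas of depth at most `k` cannot separate
assignments of the same depth-`k` type, and each type is defined by a characteristic formula of
size at most `f k`. So a depth-`n` node classifier is equivalent to the disjunction of the
characteristic formulas of the node types it accepts. There are at most `2 ^ (2 (N + 1) f k)`
types of depth `k + 1`, while at depth `0` the type of a node `v` (the assignment `x = y = v`) is
fixed by the `m1 + m2` atoms `P v`, `R v v`.
-/

open Finset

instance : Fintype Var := ⟨{Var.x, Var.y}, by rintro (_ | _) <;> simp⟩

lemma Var.card_eq : Fintype.card Var = 2 := rfl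

namespace FOC2

def conj (l : List (FOC2 P1 P2)) : FOC2 P1 P2 := l.foldr .and .tru

def disj (l : List (FOC2 P1 P2)) : FOC2 P1 P2 := l.foldr .or (.not .tru)

def lit (b : Bool) (φ : FOC2 P1 P2) : FOC2 P1 P2 := if b then φ else .not φ

def exactly (c : ℕ) (v : Var) (φ : FOC2 P1 P2) : FOC2 P1 P2 :=
  .and (.exge c v φ) (.not (.exge (c + 1) v φ))

lemma size_conj_le (l : List (FOC2 P1 P2)) {B : ℕ} (h : ∀ φ ∈ l, φ.size ≤ B) :
    (conj l).size ≤ l.length * (B + 1) + 1 := by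
  induction l with
  | nil => simp [conj, size]
  | cons φ l ih =>
    have := ih fun ψ hψ => h ψ (List.mem_cons_of_mem φ hψ)
    have := h φ List.mem_cons_self
    simp only [conj, List.foldr_cons, size, List.length_cons] at *
    nlinarith

lemma size_disj_le (l : List (FOC2 P1 P2)) {B : ℕ} (h : ∀ φ ∈ l, φ.size ≤ B) :
    (disj l).size ≤ l.length * (B + 1) + 2 := by
  induction l with
  | nil => simp [disj, size]
  | cons φ l ih =>
    have := ih fun ψ hψ => h ψ (List.mem_cons_of_mem φ hψ)
    have := h φ List.mem_cons_self
    simp only [disj, List.foldr_cons, size, List.length_cons] at *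
    nlinarith

lemma size_lit_le (b : Bool) (φ : FOC2 P1 P2) : (lit b φ).size ≤ φ.size + 1 := by
  cases b <;> simp [lit, size]

lemma size_exactly (c : ℕ) (v : Var) (φ : FOC2 P1 P2) :
    (exactly c v φ).size = 2 * φ.size + 4 := by
  simp only [exactly, size]; ring

end FOC2

namespace FOCGraph

variable (G : FOCGraph P1 P2) (σ : Var → G.V)

lemma sat_conj (l : List (FOC2 P1 P2)) : G.sat σ (.conj l) ↔ ∀ φ ∈ l, G.sat σ φ := by
  induction l with
  | nil => simp [FOC2.conj, sat]
  | cons φ l ih => simp [FOC2.conj, sat, ← ih]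

lemma sat_disj (l : List (FOC2 P1 P2)) : G.sat σ (.disj l) ↔ ∃ φ ∈ l, G.sat σ φ := by
  induction l with
  | nil => simp [FOC2.disj, sat]
  | cons φ l ih => simp [FOC2.disj, sat, ← ih]

lemma sat_lit (b : Bool) (φ : FOC2 P1 P2) : G.sat σ (.lit b φ) ↔ (G.sat σ φ ↔ b) := by
  cases b <;> simp [FOC2.lit, sat]

open scoped Classical in
lemma sat_exge (m : ℕ) (v : Var) (φ : FOC2 P1 P2) :
    G.sat σ (.exge m v φ) ↔ m ≤ #{c | G.sat (Function.update σ v c) φ} := by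
  constructor
  · rintro ⟨S, rfl, hS⟩
    exact card_le_card fun c hc => mem_filter.2 ⟨mem_univ c, hS c hc⟩
  · intro h
    obtain ⟨S, hS, rfl⟩ := exists_subset_card_eq h
    exact ⟨S, rfl, fun c hc => (mem_filter.1 (hS hc)).2⟩

open scoped Classical in
lemma sat_exactly (c : ℕ) (v : Var) (φ : FOC2 P1 P2) :
    G.sat σ (.exactly c v φ) ↔ #{d | G.sat (Function.update σ v d) φ} = c := by
  change G.sat σ (.exge c v φ) ∧ ¬ G.sat σ (.exge (c + 1) v φ) ↔ _
  rw [sat_exge, sat_exge]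
  omega

end FOCGraph

abbrev Atom (P1 P2 : Type) : Type := P1 × Var ⊕ P2 × Var × Var

namespace Atom

def toFOC2 : Atom P1 P2 → FOC2 P1 P2
  | .inl (p, v) => .atom p v
  | .inr (r, u, w) => .rel r u w

def pred : Atom P1 P2 → P1 ⊕ P2 := Sum.map Prod.fst Prod.fst

def ofPred : P1 ⊕ P2 → Atom P1 P2 :=
  Sum.elim (fun p => .inl (p, .x)) (fun r => .inr (r, .x, .x))

lemma card_eq [Fintype P1] [Fintype P2] :
    Fintype.card (Atom P1 P2) = 2 * Fintype.card P1 + 4 * Fintype.card P2 := by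
  simp only [Fintype.card_sum, Fintype.card_prod, Var.card_eq]; ring

end Atom

open scoped Classical in
noncomputable def FOCGraph.atomType (G : FOCGraph P1 P2) (σ : Var → G.V) : Atom P1 P2 → Bool :=
  fun α => decide (G.sat σ α.toFOC2)

lemma FOCGraph.atomType_eq_true_iff (G : FOCGraph P1 P2) (σ : Var → G.V) (α : Atom P1 P2) :
    G.atomType σ α = true ↔ G.sat σ α.toFOC2 := by
  simp [FOCGraph.atomType]

lemma FOCGraph.atomType_const (G : FOCGraph P1 P2) (v : G.V) :
    G.atomType (fun _ => v) = G.atomType (fun _ => v) ∘ Atom.ofPred ∘ Atom.pred := by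
  funext α
  rcases α with ⟨p, w⟩ | ⟨r, u, w⟩ <;> rfl

noncomputable def atomFormula [Fintype P1] [Fintype P2] (a : Atom P1 P2 → Bool) : FOC2 P1 P2 :=
  .conj ((univ : Finset (Atom P1 P2)).toList.map fun α => .lit (a α) α.toFOC2)

section
variable [Fintype P1] [Fintype P2]

lemma FOCGraph.sat_atomFormula_iff (G : FOCGraph P1 P2) (σ : Var → G.V)
    (a : Atom P1 P2 → Bool) :
    G.sat σ (atomFormula a) ↔ G.atomType σ = a := by
  simp only [atomFormula, FOCGraph.sat_conj, List.forall_mem_map, mem_toList, mem_univ,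
    forall_const, FOCGraph.sat_lit, funext_iff]
  refine forall_congr' fun α => ?_
  cases a α <;> simp [FOCGraph.atomType]

lemma size_atomFormula_le (a : Atom P1 P2 → Bool) :
    (atomFormula a).size ≤ 3 * Fintype.card (Atom P1 P2) + 1 := by
  have h := FOC2.size_conj_le ((univ : Finset (Atom P1 P2)).toList.map
    fun α => .lit (a α) α.toFOC2) (B := 2) <| List.forall_mem_map.2 fun α _ =>
      (FOC2.size_lit_le _ _).trans (by rcases α with ⟨p, w⟩ | ⟨r, u, w⟩ <;> rfl)
  rwa [List.length_map, length_toList, card_univ, mul_comm] at h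

end

def CountType (P1 P2 : Type) (N : ℕ) : ℕ → Type
  | 0 => Atom P1 P2 → Bool
  | k + 1 => (Atom P1 P2 → Bool) × (Var → CountType P1 P2 N k → Fin (N + 1))

open scoped Classical in
noncomputable instance CountType.instFintype [Fintype P1] [Fintype P2] (N : ℕ) :
    ∀ k, Fintype (CountType P1 P2 N k)
  | 0 => inferInstanceAs (Fintype (Atom P1 P2 → Bool))
  | k + 1 =>
    have := CountType.instFintype N k
    inferInstanceAs
      (Fintype ((Atom P1 P2 → Bool) × (Var → CountType P1 P2 N k → Fin (N + 1))))

def CountType.atomPart {N : ℕ} : ∀ {k}, CountType P1 P2 N k → Atom P1 P2 → Bool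
  | 0, t => t
  | _ + 1, t => t.1

-- Counts are capped at `N` by `Fin.clamp`; on graphs with at most `N` nodes the cap never acts.
open scoped Classical in
noncomputable def FOCGraph.countType (G : FOCGraph P1 P2) (N : ℕ) :
    ∀ k, (Var → G.V) → CountType P1 P2 N k
  | 0, σ => G.atomType σ
  | k + 1, σ =>
    (G.atomType σ, fun v s => Fin.clamp #{c | G.countType N k (Function.update σ v c) = s} N)

namespace FOCGraph

variable {N : ℕ} (G : FOCGraph P1 P2)

lemma atomPart_countType (k : ℕ) (σ : Var → G.V) :
    (G.countType N k σ).atomPart = G.atomType σ := by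
  cases k <;> rfl

open scoped Classical in
lemma card_filter_le_of_card_le (hG : Fintype.card G.V ≤ N) (p : G.V → Prop) :
    #{c | p c} ≤ N :=
  (card_filter_le _ _).trans (by rwa [card_univ])

open scoped Classical in
lemma countType_succ_eq_iff (hG : Fintype.card G.V ≤ N) (k : ℕ) (σ : Var → G.V)
    (t : CountType P1 P2 N (k + 1)) :
    G.countType N (k + 1) σ = t ↔ G.atomType σ = t.1 ∧
      ∀ v s, #{c | G.countType N k (Function.update σ v c) = s} = t.2 v s := by
  have hcap : ∀ v s, min #{c | G.countType N k (Function.update σ v c) = s} N =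
      #{c | G.countType N k (Function.update σ v c) = s} :=
    fun v s => min_eq_left (G.card_filter_le_of_card_le hG _)
  refine Prod.ext_iff.trans (and_congr Iff.rfl ?_)
  simp only [funext_iff, Fin.ext_iff]
  exact forall₂_congr fun v s => by rw [← hcap v s]; rfl

lemma sat_toFOC2_iff (k : ℕ) (σ : Var → G.V) (α : Atom P1 P2) :
    G.sat σ α.toFOC2 ↔ (G.countType N k σ).atomPart α = true := by
  rw [atomPart_countType, atomType_eq_true_iff]

end FOCGraph

open scoped Classical in
theorem FOC2.exists_sat_iff_countType [Fintype P1] [Fintype P2] (N : ℕ) (φ : FOC2 P1 P2)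
    {k : ℕ} (hk : φ.depth ≤ k) :
    ∃ Q : CountType P1 P2 N k → Prop, ∀ G : FOCGraph P1 P2, Fintype.card G.V ≤ N →
      ∀ σ, G.sat σ φ ↔ Q (G.countType N k σ) := by
  induction φ generalizing k with
  | tru => exact ⟨fun _ => True, fun G _ σ => Iff.rfl⟩
  | atom p v =>
    exact ⟨fun t => t.atomPart (.inl (p, v)) = true,
      fun G _ σ => G.sat_toFOC2_iff k σ (.inl (p, v))⟩
  | rel r u w =>
    exact ⟨fun t => t.atomPart (.inr (r, u, w)) = true,
      fun G _ σ => G.sat_toFOC2_iff k σ (.inr (r, u, w))⟩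
  | and φ ψ ihφ ihψ =>
    obtain ⟨Qφ, hφ⟩ := ihφ (le_of_max_le_left hk)
    obtain ⟨Qψ, hψ⟩ := ihψ (le_of_max_le_right hk)
    exact ⟨fun t => Qφ t ∧ Qψ t, fun G hG σ => and_congr (hφ G hG σ) (hψ G hG σ)⟩
  | or φ ψ ihφ ihψ =>
    obtain ⟨Qφ, hφ⟩ := ihφ (le_of_max_le_left hk)
    obtain ⟨Qψ, hψ⟩ := ihψ (le_of_max_le_right hk)
    exact ⟨fun t => Qφ t ∨ Qψ t, fun G hG σ => or_congr (hφ G hG σ) (hψ G hG σ)⟩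
  | not φ ih =>
    obtain ⟨Q, hQ⟩ := ih hk
    exact ⟨fun t => ¬ Q t, fun G hG σ => not_congr (hQ G hG σ)⟩
  | exge m v ψ ih =>
    obtain ⟨j, rfl⟩ : ∃ j, k = j + 1 :=
      Nat.exists_eq_add_one_of_ne_zero (by simp only [depth] at hk; omega)
    obtain ⟨Q, hQ⟩ := ih (k := j) (by simp only [depth] at hk; omega)
    refine ⟨fun t => m ≤ ∑ s with Q s, (t.2 v s : ℕ), fun G hG σ => ?_⟩
    have hcount : #{c | G.sat (Function.update σ v c) ψ} =
        ∑ s with Q s, ((G.countType N (j + 1) σ).2 v s : ℕ) := by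
      calc #{c | G.sat (Function.update σ v c) ψ}
          = #{c | G.countType N j (Function.update σ v c) ∈ ({s | Q s} : Finset _)} := by
            simp [hQ G hG]
        _ = ∑ s with Q s, #{c | G.countType N j (Function.update σ v c) = s} :=
            (sum_card_fiberwise_eq_card_filter _ _ _).symm
        _ = _ := sum_congr rfl fun s _ => ((G.countType_succ_eq_iff hG j σ _).1 rfl).2 v s
    rw [G.sat_exge, hcount]

noncomputable def CountType.charFormula [Fintype P1] [Fintype P2] {N : ℕ} :
    ∀ {k}, CountType P1 P2 N k → FOC2 P1 P2
  | 0, a => atomFormula a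
  | k + 1, t =>
    .and (atomFormula t.1) (.conj ((univ : Finset (Var × CountType P1 P2 N k)).toList.map
      fun vs => .exactly (t.2 vs.1 vs.2) vs.1 (charFormula vs.2)))

open scoped Classical in
theorem FOCGraph.sat_charFormula_iff [Fintype P1] [Fintype P2] {N : ℕ} (G : FOCGraph P1 P2)
    (hG : Fintype.card G.V ≤ N) (k : ℕ) (σ : Var → G.V) (t : CountType P1 P2 N k) :
    G.sat σ t.charFormula ↔ G.countType N k σ = t := by
  induction k generalizing σ with
  | zero => exact G.sat_atomFormula_iff σ t
  | succ k ih =>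
    rw [G.countType_succ_eq_iff hG]
    change G.sat σ (atomFormula t.1) ∧ G.sat σ (.conj _) ↔ _
    simp only [sat_atomFormula_iff, sat_conj, List.forall_mem_map, mem_toList, mem_univ,
      forall_const, Prod.forall, sat_exactly]
    exact and_congr Iff.rfl <| forall₂_congr fun v s => by rw [filter_congr fun d _ => ih _ s]

section Arithmetic

lemma eight_mul_sq_le_two_pow {x : ℕ} (hx : 10 ≤ x) : 8 * x ^ 2 ≤ 2 ^ x := by
  induction x, hx using Nat.le_induction with
  | base => norm_num
  | succ x hx ih => rw [pow_succ 2 x]; nlinarith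

lemma four_mul_le_two_pow_two_mul (s : ℕ) : 4 * s ≤ 2 ^ (2 * s) + 1 := by
  have := Nat.two_mul_sq_add_one_le_two_pow_two_mul s
  zify at this ⊢
  nlinarith [sq_nonneg ((s : ℤ) - 1)]

lemma two_pow_mul_pow_sq_le {A T F N : ℕ} (hA : A ≤ F) (hT : T ≤ F) :
    2 ^ A * ((N + 1) ^ T) ^ 2 ≤ 2 ^ (2 * (N + 1) * F) := by
  have hN : (N + 1) ^ T ≤ (2 ^ N) ^ F :=
    (Nat.pow_le_pow_left N.lt_two_pow_self T).trans (Nat.pow_le_pow_right Nat.one_le_two_pow hT)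
  calc 2 ^ A * ((N + 1) ^ T) ^ 2 ≤ 2 ^ A * ((2 ^ N) ^ F) ^ 2 := by gcongr
    _ = 2 ^ (A + 2 * N * F) := by rw [← pow_mul, ← pow_mul, ← pow_add]; ring_nf
    _ ≤ 2 ^ (2 * (N + 1) * F) := Nat.pow_le_pow_right two_pos (by nlinarith)

lemma size_step_le {A T B F N : ℕ} (hA : 3 * A + 1 ≤ F) (hT : T ≤ F) (hB : B ≤ F)
    (hF : 5 ≤ F) :
    3 * A + 1 + 2 * T * (2 * B + 5) + 2 ≤ 2 ^ (2 * (N + 1) * F) := by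
  calc 3 * A + 1 + 2 * T * (2 * B + 5) + 2 ≤ 8 * (2 * F) ^ 2 := by nlinarith
    _ ≤ 2 ^ (2 * F) := eight_mul_sq_le_two_pow (by omega)
    _ ≤ 2 ^ (2 * (N + 1) * F) := Nat.pow_le_pow_right two_pos (by nlinarith)

lemma mul_succ_add_two_le_two_pow {E r b : ℕ} (hE : 10 ≤ E) (hr : r ≤ E) (hb : b ≤ E) :
    r * (b + 1) + 2 ≤ 2 ^ E :=
  calc r * (b + 1) + 2 ≤ 8 * E ^ 2 := by nlinarith
    _ ≤ 2 ^ E := eight_mul_sq_le_two_pow hE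

variable (m1 m2 N : ℕ)

lemma fbound_le_succ (k : ℕ) : fbound m1 m2 N k ≤ fbound m1 m2 N (k + 1) := by
  set F := fbound m1 m2 N k
  have hF : F ≤ 2 ^ (2 * (N + 1) * F) :=
    F.lt_two_pow_self.le.trans (Nat.pow_le_pow_right two_pos (by nlinarith))
  exact hF.trans (Nat.lt_two_pow_self.le)

lemma fbound_zero_le (k : ℕ) : fbound m1 m2 N 0 ≤ fbound m1 m2 N k :=
  monotone_nat_of_le_succ (fbound_le_succ m1 m2 N) (Nat.zero_le k)

lemma atom_bound_le_fbound (k : ℕ) : 3 * (2 * m1 + 4 * m2) + 1000 ≤ fbound m1 m2 N k := by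
  refine le_trans ?_ (fbound_zero_le m1 m2 N k)
  have := four_mul_le_two_pow_two_mul (m1 + m2)
  have := (2 ^ (2 * (m1 + m2))).lt_two_pow_self
  have : 1 ≤ 2 ^ (2 * (m1 + m2)) := Nat.one_le_two_pow
  simp only [fbound]
  omega

lemma two_pow_atom_le_fbound_zero : 2 ^ (2 * m1 + 4 * m2) ≤ fbound m1 m2 N 0 := by
  calc 2 ^ (2 * m1 + 4 * m2) ≤ 2 ^ (2 ^ (2 * (m1 + m2)) + 1) :=
        Nat.pow_le_pow_right two_pos (by have := four_mul_le_two_pow_two_mul (m1 + m2); omega)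
    _ ≤ fbound m1 m2 N 0 := by rw [pow_succ, fbound]; omega

lemma two_pow_two_pow_le_fbound_zero : 2 ^ 2 ^ (m1 + m2) ≤ fbound m1 m2 N 0 := by
  calc 2 ^ 2 ^ (m1 + m2) ≤ 2 ^ 2 ^ (2 * (m1 + m2)) :=
        Nat.pow_le_pow_right two_pos (Nat.pow_le_pow_right two_pos (by omega))
    _ ≤ fbound m1 m2 N 0 := by rw [fbound]; omega

lemma classifier_size_le_fbound_zero :
    2 ^ (m1 + m2) * (3 * (2 * m1 + 4 * m2) + 2) + 2 ≤ fbound m1 m2 N 0 := by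
  set X := 2 ^ (2 * (m1 + m2))
  have hA : 4 * (m1 + m2) ≤ X + 1 := four_mul_le_two_pow_two_mul _
  have hX : 2 ^ (m1 + m2) ≤ X := Nat.pow_le_pow_right two_pos (by omega)
  have hX1 : 1 ≤ X := Nat.one_le_two_pow
  have hsq : X * X ≤ 2 * 2 ^ X := by
    rw [← pow_add, ← pow_succ']
    exact Nat.pow_le_pow_right two_pos (by omega)
  calc 2 ^ (m1 + m2) * (3 * (2 * m1 + 4 * m2) + 2) + 2 ≤ X * (3 * (X + 1) + 2) + 2 :=
        Nat.add_le_add_right (Nat.mul_le_mul hX (by omega)) 2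
    _ ≤ 10 * (X * X) := by nlinarith
    _ ≤ 1000 * 2 ^ X := by omega

variable {m1 m2 N}

lemma mul_succ_add_two_le_fbound_succ {k r b : ℕ}
    (hr : r ≤ 2 ^ (2 * (N + 1) * fbound m1 m2 N k))
    (hb : b ≤ 2 ^ (2 * (N + 1) * fbound m1 m2 N k)) :
    r * (b + 1) + 2 ≤ fbound m1 m2 N (k + 1) := by
  refine mul_succ_add_two_le_two_pow ?_ hr hb
  have := atom_bound_le_fbound m1 m2 N k
  have : 2 * (N + 1) * fbound m1 m2 N k < 2 ^ (2 * (N + 1) * fbound m1 m2 N k) :=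
    Nat.lt_two_pow_self
  nlinarith

end Arithmetic

section Classifiers

variable [Fintype P1] [Fintype P2]

lemma CountType.card_zero (N : ℕ) :
    Fintype.card (CountType P1 P2 N 0) = 2 ^ Fintype.card (Atom P1 P2) := by
  rw [Fintype.card_eq_nat_card]
  change Nat.card (Atom P1 P2 → Bool) = _
  simp [Nat.card_fun]

lemma CountType.card_succ (N k : ℕ) :
    Fintype.card (CountType P1 P2 N (k + 1)) =
      2 ^ Fintype.card (Atom P1 P2) * ((N + 1) ^ Fintype.card (CountType P1 P2 N k)) ^ 2 := by
  rw [Fintype.card_eq_nat_card]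
  change Nat.card ((Atom P1 P2 → Bool) × (Var → CountType P1 P2 N k → Fin (N + 1))) = _
  simp [Nat.card_fun, Var.card_eq]

lemma CountType.size_charFormula_succ_le {N k B : ℕ}
    (hB : ∀ s : CountType P1 P2 N k, s.charFormula.size ≤ B) (t : CountType P1 P2 N (k + 1)) :
    t.charFormula.size ≤
      3 * Fintype.card (Atom P1 P2) + 1 + 2 * Fintype.card (CountType P1 P2 N k) * (2 * B + 5)
        + 2 := by
  have hconj := FOC2.size_conj_le ((univ : Finset (Var × CountType P1 P2 N k)).toList.map
    fun vs => .exactly (t.2 vs.1 vs.2) vs.1 vs.2.charFormula) (B := 2 * B + 4) <| by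
      simp only [List.forall_mem_map, FOC2.size_exactly]
      exact fun vs _ => by linarith [hB vs.2]
  have hatom := size_atomFormula_le t.1
  simp only [List.length_map, length_toList, card_univ, Fintype.card_prod, Var.card_eq] at hconj
  change (atomFormula t.1).size + (FOC2.conj _).size + 1 ≤ _
  linarith

lemma CountType.card_succ_le (N k : ℕ)
    (hk : Fintype.card (CountType P1 P2 N k) ≤ fbound (Fintype.card P1) (Fintype.card P2) N k) :
    Fintype.card (CountType P1 P2 N (k + 1)) ≤
      2 ^ (2 * (N + 1) * fbound (Fintype.card P1) (Fintype.card P2) N k) := by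
  have := atom_bound_le_fbound (Fintype.card P1) (Fintype.card P2) N k
  rw [CountType.card_succ, Atom.card_eq]
  exact two_pow_mul_pow_sq_le (by omega) hk

lemma CountType.card_le_fbound (N : ℕ) : ∀ k,
    Fintype.card (CountType P1 P2 N k) ≤ fbound (Fintype.card P1) (Fintype.card P2) N k
  | 0 => by
    rw [CountType.card_zero, Atom.card_eq]
    exact two_pow_atom_le_fbound_zero _ _ N
  | k + 1 => (CountType.card_succ_le N k (CountType.card_le_fbound N k)).trans
      Nat.lt_two_pow_self.le

lemma CountType.size_charFormula_succ_le_of_le_fbound {N k : ℕ}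
    (hk : ∀ s : CountType P1 P2 N k,
      s.charFormula.size ≤ fbound (Fintype.card P1) (Fintype.card P2) N k)
    (t : CountType P1 P2 N (k + 1)) :
    t.charFormula.size ≤ 2 ^ (2 * (N + 1) * fbound (Fintype.card P1) (Fintype.card P2) N k) := by
  have := atom_bound_le_fbound (Fintype.card P1) (Fintype.card P2) N k
  refine (CountType.size_charFormula_succ_le hk t).trans ?_
  rw [Atom.card_eq]
  exact size_step_le (by omega) (CountType.card_le_fbound N k) le_rfl (by omega)

lemma CountType.size_charFormula_le_fbound (N : ℕ) : ∀ k (t : CountType P1 P2 N k),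
    t.charFormula.size ≤ fbound (Fintype.card P1) (Fintype.card P2) N k
  | 0, t => by
    have := atom_bound_le_fbound (Fintype.card P1) (Fintype.card P2) N 0
    have := size_atomFormula_le t
    rw [Atom.card_eq] at this
    change (atomFormula t).size ≤ _
    omega
  | k + 1, t => (CountType.size_charFormula_succ_le_of_le_fbound
      (CountType.size_charFormula_le_fbound N k) t).trans Nat.lt_two_pow_self.le

open scoped Classical in
noncomputable def nodeTypes (P1 P2 : Type) [Fintype P1] [Fintype P2] (N k : ℕ) :
    Finset (CountType P1 P2 N k) :=
  {t | ∃ G : FOCGraph P1 P2, Fintype.card G.V ≤ N ∧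
    ∃ v : G.V, G.countType N k (fun _ => v) = t}

noncomputable def classifiers (P1 P2 : Type) [Fintype P1] [Fintype P2] (N k : ℕ) :
    List (FOC2 P1 P2) :=
  (nodeTypes P1 P2 N k).powerset.toList.map fun T => .disj (T.toList.map CountType.charFormula)

open scoped Classical in
lemma card_nodeTypes_zero_le (N : ℕ) :
    #(nodeTypes P1 P2 N 0) ≤ 2 ^ (Fintype.card P1 + Fintype.card P2) := by
  calc #(nodeTypes P1 P2 N 0) ≤ #(univ : Finset (P1 ⊕ P2 → Bool)) := by
        refine card_le_card_of_surjOn (fun b => b ∘ Atom.pred) fun t ht => ?_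
        obtain ⟨G, -, v, rfl⟩ := (mem_filter.1 ht).2
        exact ⟨G.atomType (fun _ => v) ∘ Atom.ofPred, mem_univ _, (G.atomType_const v).symm⟩
    _ = 2 ^ (Fintype.card P1 + Fintype.card P2) := by simp

lemma length_classifiers_le_fbound (N n : ℕ) :
    (classifiers P1 P2 N n).length ≤ fbound (Fintype.card P1) (Fintype.card P2) N n := by
  rw [classifiers, List.length_map, length_toList, card_powerset]
  cases n with
  | zero =>
    exact (Nat.pow_le_pow_right two_pos (card_nodeTypes_zero_le N)).trans
      (two_pow_two_pow_le_fbound_zero _ _ N)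
  | succ k =>
    exact Nat.pow_le_pow_right two_pos
      ((card_le_univ _).trans (CountType.card_succ_le N k (CountType.card_le_fbound N k)))

lemma size_le_of_mem_classifiers {N k B : ℕ}
    (hB : ∀ t : CountType P1 P2 N k, t.charFormula.size ≤ B) {ψ : FOC2 P1 P2}
    (hψ : ψ ∈ classifiers P1 P2 N k) : ψ.size ≤ #(nodeTypes P1 P2 N k) * (B + 1) + 2 := by
  obtain ⟨T, hT, rfl⟩ := List.mem_map.1 hψ
  refine (FOC2.size_disj_le _ (List.forall_mem_map.2 fun t _ => hB t)).trans ?_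
  rw [List.length_map, length_toList]
  gcongr
  exact mem_powerset.1 (mem_toList.1 hT)

lemma size_le_fbound_of_mem_classifiers {N n : ℕ} {ψ : FOC2 P1 P2}
    (hψ : ψ ∈ classifiers P1 P2 N n) :
    ψ.size ≤ fbound (Fintype.card P1) (Fintype.card P2) N n := by
  cases n with
  | zero =>
    refine (size_le_of_mem_classifiers (fun t => size_atomFormula_le t) hψ).trans ?_
    rw [Atom.card_eq]
    exact (Nat.add_le_add_right (Nat.mul_le_mul_right _ (card_nodeTypes_zero_le N)) 2).trans
      (classifier_size_le_fbound_zero _ _ N)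
  | succ k =>
    refine (size_le_of_mem_classifiers (CountType.size_charFormula_succ_le_of_le_fbound
      (CountType.size_charFormula_le_fbound N k)) hψ).trans ?_
    exact mul_succ_add_two_le_fbound_succ
      ((card_le_univ _).trans (CountType.card_succ_le N k (CountType.card_le_fbound N k))) le_rfl

theorem exists_mem_classifiers_sat_iff (N : ℕ) (φ : FOC2 P1 P2) {k : ℕ} (hk : φ.depth ≤ k) :
    ∃ ψ ∈ classifiers P1 P2 N k, ∀ G : FOCGraph P1 P2, Fintype.card G.V ≤ N →
      ∀ v : G.V, (G.sat (fun _ => v) φ ↔ G.sat (fun _ => v) ψ) := by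
  classical
  obtain ⟨Q, hQ⟩ := φ.exists_sat_iff_countType N hk
  refine ⟨.disj (((nodeTypes P1 P2 N k).filter Q).toList.map CountType.charFormula),
    List.mem_map_of_mem (by simp), fun G hG v => ?_⟩
  have hv : G.countType N k (fun _ => v) ∈ nodeTypes P1 P2 N k := by
    simpa [nodeTypes] using ⟨G, hG, v, rfl⟩
  simp [hQ G hG, G.sat_disj, G.sat_charFormula_iff hG, hv]

end Classifiers

/-- On the class of graphs with at most `N` nodes, the `FOC2` node classifiers of
quantifier depth at most `n` number at most `f n`, each representable with parse-tree
size at most `f n`. -/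
theorem stmt14 {P1 P2 : Type} [Fintype P1] [Fintype P2] (N n : ℕ) :
    ∃ Φ : List (FOC2 P1 P2),
      Φ.length ≤ fbound (Fintype.card P1) (Fintype.card P2) N n ∧
      (∀ ψ ∈ Φ, ψ.size ≤ fbound (Fintype.card P1) (Fintype.card P2) N n) ∧
      ∀ φ : FOC2 P1 P2, φ.depth ≤ n → φ.freeVars ⊆ {Var.x} →
        ∃ ψ ∈ Φ, ∀ G : FOCGraph P1 P2, Fintype.card G.V ≤ N →
          ∀ v : G.V, (G.sat (fun _ => v) φ ↔ G.sat (fun _ => v) ψ) :=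
  ⟨classifiers P1 P2 N n, length_classifiers_le_fbound N n,
    fun _ hψ => size_le_fbound_of_mem_classifiers hψ,
    fun φ hφ _ => exists_mem_classifiers_sat_iff N φ hφ⟩
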